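/- arXiv:2311.01959 — 3 statements merged into one kernel-verified Lean document; each statement's English description precedes it below -/
import Mathlib

section
/- Let A ∈ ℝ^{m×n} and let z ∈ ℝ^n be cycle-free with respect to A. Then ‖z‖_∞ ≤ κ(X_A)·‖Az‖₁ and ‖z‖₂ ≤ m·κ(X_A)·‖Az‖₂. -/
/-! Write `x = (z, Az) ∈ X_A` as a conformal sum of elementary vectors `g_ℓ` of `X_A`.
Cycle-freeness of `z` forces every `g_ℓ` to have a nonzero entry `j_ℓ` in its `Az`-block, so
by the definition of `κ` each entry of its `z`-block is at most `κ |g_ℓ(j_ℓ)|`. By conformality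
absolute values add up along the decomposition, which gives the `ℓ_∞` bound; for the `ℓ_2`
bound one uses in addition that an elementary vector of `ker (A | -I)` has at most `m + 1`
nonzero entries. -/

open BigOperators Finset

noncomputable section

open Classical

/-- A nonzero `g ∈ W` is an elementary vector of `W` if no nonzero `h ∈ W`
has strictly smaller support. -/
def IsElementaryVec {ι : Type*} (W : Submodule ℝ (ι → ℝ)) (g : ι → ℝ) : Prop :=
  g ∈ W ∧ g ≠ 0 ∧ ∀ h : ι → ℝ, h ∈ W → h ≠ 0 → ¬ ({i | h i ≠ 0} ⊂ {i | g i ≠ 0})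

/-- The circuit imbalance measure `κ(W)`: the maximum of `|g j / g i|` over elementary
vectors `g` of `W` and `i, j ∈ supp(g)`, with `κ(W) := 1` for the trivial subspaces. -/
noncomputable def kappaSub {ι : Type*} (W : Submodule ℝ (ι → ℝ)) : ℝ :=
  if W = ⊥ ∨ W = ⊤ then 1
  else sSup {t : ℝ | ∃ g : ι → ℝ, IsElementaryVec W g ∧
    ∃ i j : ι, g i ≠ 0 ∧ g j ≠ 0 ∧ t = |g j / g i|}

/-- `y` conforms to `x` if `x i * y i > 0` whenever `y i ≠ 0`. -/
def Conforms {ι : Type*} (x y : ι → ℝ) : Prop :=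
  ∀ i, y i ≠ 0 → x i * y i > 0

/-- The extended subspace `X_A := ker (A | −I_m) ⊆ ℝ^{n+m}`. -/
noncomputable def XA {m n : ℕ} (A : Matrix (Fin m) (Fin n) ℝ) :
    Submodule ℝ (Fin n ⊕ Fin m → ℝ) :=
  LinearMap.ker (Matrix.fromCols A (-1)).mulVecLin

open Function

namespace Conforms

variable {ι : Type*} {x y g : ι → ℝ}

theorem refl (x : ι → ℝ) : Conforms x x := fun _ hx => mul_self_pos.2 hx

theorem trans (hxy : Conforms x y) (hyg : Conforms y g) : Conforms x g := by
  intro i hg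
  have hyg' := hyg i hg
  have hy : y i ≠ 0 := by rintro h; simp [h] at hyg'
  have hxy' := hxy i hy
  by_contra! hle
  nlinarith [mul_pos hxy' hyg', mul_self_pos.2 hy]

theorem support_subset (h : Conforms x y) : support y ⊆ support x :=
  fun i hy hx => by simpa [hx] using h i hy

theorem ncard_support_lt [Finite ι] (h : Conforms x y) {i : ι} (hx : x i ≠ 0) (hy : y i = 0) :
    (support y).ncard < (support x).ncard :=
  Set.ncard_lt_ncard ((Set.ssubset_iff_of_subset h.support_subset).2 ⟨i, hx, by simpa⟩)

theorem smul_of_pos (h : Conforms x y) {c : ℝ} (hc : 0 < c) : Conforms x (c • y) := by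
  intro i hi
  have hy : y i ≠ 0 := right_ne_zero_of_mul hi
  simpa [mul_left_comm] using mul_pos hc (h i hy)

theorem abs_eq_sign_mul (h : Conforms x y) (i : ι) : |y i| = SignType.sign (x i) * y i := by
  by_cases hy : y i = 0
  · simp [hy]
  have hxy := h i hy
  rcases lt_trichotomy (x i) 0 with hx | hx | hx
  · have : y i < 0 := by nlinarith
    simp [hx, abs_of_neg this]
  · simp [hx] at hxy
  · have : 0 < y i := by nlinarith
    simp [hx, abs_of_pos this]

theorem sum_abs_eq {α : Type*} [Fintype α] {g : α → ι → ℝ} (hg : ∀ ℓ, Conforms x (g ℓ))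
    (hx : ∑ ℓ, g ℓ = x) (i : ι) : ∑ ℓ, |g ℓ i| = |x i| := by
  simp_rw [(hg _).abs_eq_sign_mul i, ← Finset.mul_sum, ← Finset.sum_apply, hx, sign_mul_self]

end Conforms

theorem exists_conforms_sub_smul {ι : Type*} [Fintype ι] {y h : ι → ℝ}
    (hsupp : support h ⊆ support y) (h0 : h ≠ 0) :
    ∃ i, h i ≠ 0 ∧ Conforms y (y - (y i / h i) • h) ∧ (y - (y i / h i) • h) i = 0 := by
  obtain ⟨i, hi, hmin⟩ := (Finset.univ.filter (h · ≠ 0)).exists_min_image (fun i => |y i / h i|)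
    (by obtain ⟨j, hj⟩ := Function.ne_iff.1 h0; exact ⟨j, by simpa using hj⟩)
  simp only [Finset.mem_filter, Finset.mem_univ, true_and] at hi hmin
  refine ⟨i, hi, fun j hj => ?_, by simp [hi]⟩
  set t := y i / h i
  by_cases hhj : h j = 0
  · simp only [Pi.sub_apply, Pi.smul_apply, hhj, smul_zero, sub_zero] at hj ⊢
    exact mul_self_pos.2 hj
  have hyj : y j ≠ 0 := hsupp hhj
  set r := y j / h j
  have hyr : y j = r * h j := by simp [r, hhj]
  -- `r t ≤ |r| |t| ≤ r ^ 2` since `i` minimises `|y i / h i|`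
  have hrt : r * t ≤ r * r := by
    nlinarith [le_abs_self (r * t), abs_mul r t, abs_mul_abs_self r,
      mul_le_mul_of_nonneg_left (hmin j hhj) (abs_nonneg r)]
  have hnonneg : 0 ≤ y j * (y - t • h) j := by
    simp only [Pi.sub_apply, Pi.smul_apply, smul_eq_mul, hyr]
    nlinarith [sq_nonneg (h j)]
  exact hnonneg.lt_of_ne (mul_ne_zero hyj hj).symm

namespace IsElementaryVec

variable {ι : Type*} {W : Submodule ℝ (ι → ℝ)} {g g' : ι → ℝ}

theorem smul (hg : IsElementaryVec W g) {c : ℝ} (hc : c ≠ 0) : IsElementaryVec W (c • g) := by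
  refine ⟨W.smul_mem c hg.1, smul_ne_zero hc hg.2.1, ?_⟩
  rw [show {i | (c • g) i ≠ 0} = {i | g i ≠ 0} from support_const_smul_of_ne_zero c g hc]
  exact hg.2.2

theorem eq_of_top (hg : IsElementaryVec ⊤ g) {i j : ι} (hi : g i ≠ 0) (hj : g j ≠ 0) : i = j := by
  by_contra hij
  refine hg.2.2 (Pi.single j 1) trivial (by simp) ⟨fun k hk => ?_, fun hsub => ?_⟩
  · obtain rfl : k = j := by simpa [Pi.single_apply] using hk
    exact hj
  · simpa [Pi.single_apply, hij] using hsub hi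

theorem div_eq_of_support_eq (hg : IsElementaryVec W g) (hg' : IsElementaryVec W g')
    (hsupp : support g = support g') (i j : ι) : g j / g i = g' j / g' i := by
  have hzero : ∀ k, g k = 0 ↔ g' k = 0 := fun k => by
    rw [← notMem_support, hsupp, notMem_support]
  by_cases hi : g i = 0
  · simp [hi, (hzero i).1 hi]
  have hi' : g' i ≠ 0 := mt (hzero i).2 hi
  set c := g i / g' i
  suffices g = c • g' by
    rw [this]
    simp only [Pi.smul_apply, smul_eq_mul]
    exact mul_div_mul_left _ _ (div_ne_zero hi hi')
  by_contra hne
  refine hg.2.2 (g - c • g') (W.sub_mem hg.1 (W.smul_mem c hg'.1)) (sub_ne_zero.2 hne)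
    ((Set.ssubset_iff_of_subset fun k hk => ?_).2 ⟨i, hi, by simp [c, hi']⟩)
  by_contra hgk
  simp_all

end IsElementaryVec

theorem bddAbove_kappa_set {ι : Type*} [Finite ι] (W : Submodule ℝ (ι → ℝ)) :
    BddAbove {t : ℝ | ∃ g : ι → ℝ, IsElementaryVec W g ∧
      ∃ i j : ι, g i ≠ 0 ∧ g j ≠ 0 ∧ t = |g j / g i|} := by
  -- elementary vectors with equal supports are proportional, and there are finitely many supports
  let rep : Set ι → ι → ℝ := fun S => Classical.epsilon fun g => IsElementaryVec W g ∧ support g = S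
  refine (Set.finite_range fun p : Set ι × ι × ι => |rep p.1 p.2.2 / rep p.1 p.2.1|)
    |>.bddAbove.mono ?_
  rintro _ ⟨g, hg, i, j, -, -, rfl⟩
  have hrep : IsElementaryVec W (rep (support g)) ∧ support (rep (support g)) = support g :=
    Classical.epsilon_spec (p := fun g' => IsElementaryVec W g' ∧ support g' = support g)
      ⟨g, hg, rfl⟩
  exact ⟨(support g, i, j), by
    show |rep (support g) j / rep (support g) i| = _
    rw [hrep.1.div_eq_of_support_eq hg hrep.2]⟩

theorem kappaSub_nonneg {ι : Type*} (W : Submodule ℝ (ι → ℝ)) : 0 ≤ kappaSub W := by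
  unfold kappaSub
  split
  · exact zero_le_one
  · apply Real.sSup_nonneg
    rintro t ⟨g, _, i, j, _, _, rfl⟩
    exact abs_nonneg _

theorem abs_le_kappaSub_mul {ι : Type*} [Finite ι] {W : Submodule ℝ (ι → ℝ)} {g : ι → ℝ}
    (hg : IsElementaryVec W g) {i j : ι} (hi : g i ≠ 0) (hj : g j ≠ 0) :
    |g j| ≤ kappaSub W * |g i| := by
  have : |g j / g i| ≤ kappaSub W := by
    unfold kappaSub
    split_ifs with hW
    · rcases hW with rfl | rfl
      · exact absurd ((Submodule.mem_bot ℝ).1 hg.1) hg.2.1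
      · rw [hg.eq_of_top hi hj, div_self hj, abs_one]
    · exact le_csSup (bddAbove_kappa_set W) ⟨g, hg, i, j, hi, hj, rfl⟩
  rwa [abs_div, div_le_iff₀ (abs_pos.2 hi)] at this

theorem exists_isElementaryVec_conforms {ι : Type*} [Fintype ι] {W : Submodule ℝ (ι → ℝ)}
    {x : ι → ℝ} (hx : x ∈ W) (hx0 : x ≠ 0) : ∃ g, IsElementaryVec W g ∧ Conforms x g := by
  by_cases hel : IsElementaryVec W x
  · exact ⟨x, hel, .refl x⟩
  obtain ⟨h, hh, hh0, hss⟩ : ∃ h ∈ W, h ≠ 0 ∧ {i | h i ≠ 0} ⊂ {i | x i ≠ 0} := by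
    simpa [IsElementaryVec, hx, hx0] using hel
  obtain ⟨i, hi, hconf, hzero⟩ := exists_conforms_sub_smul hss.subset hh0
  obtain ⟨j, hjx, hjh⟩ := Set.exists_of_ssubset hss
  have hx'0 : x - (x i / h i) • h ≠ 0 := fun h0 =>
    hjx (by simpa [notMem_support.1 hjh] using congrFun h0 j)
  have := hconf.ncard_support_lt (hss.subset hi) hzero
  obtain ⟨g, hg, hconf'⟩ := exists_isElementaryVec_conforms (W.sub_mem hx (W.smul_mem _ hh)) hx'0
  exact ⟨g, hg, hconf.trans hconf'⟩
termination_by (support x).ncard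

theorem exists_sum_isElementaryVec_conforms {ι : Type*} [Fintype ι] {W : Submodule ℝ (ι → ℝ)}
    {x : ι → ℝ} (hx : x ∈ W) : ∃ (k : ℕ) (g : Fin k → ι → ℝ),
      (∀ ℓ, IsElementaryVec W (g ℓ) ∧ Conforms x (g ℓ)) ∧ ∑ ℓ, g ℓ = x := by
  by_cases hx0 : x = 0
  · exact ⟨0, Fin.elim0, fun ℓ => ℓ.elim0, by simp [hx0]⟩
  obtain ⟨g, hg, hxg⟩ := exists_isElementaryVec_conforms hx hx0
  obtain ⟨i, hi, hconf, hzero⟩ := exists_conforms_sub_smul hxg.support_subset hg.2.1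
  have ht : 0 < x i / g i := div_pos_iff.2 (mul_pos_iff.1 (hxg i hi))
  have := hconf.ncard_support_lt (hxg.support_subset hi) hzero
  obtain ⟨k, g', hg', hsum⟩ :=
    exists_sum_isElementaryVec_conforms (W.sub_mem hx (W.smul_mem _ hg.1))
  refine ⟨k + 1, Fin.cons ((x i / g i) • g) g',
    Fin.cases ⟨hg.smul ht.ne', hxg.smul_of_pos ht⟩ fun ℓ => ⟨(hg' ℓ).1, hconf.trans (hg' ℓ).2⟩, ?_⟩
  simp [Fin.sum_cons, hsum]
termination_by (support x).ncard

theorem exists_ne_zero_mem_ker_support_subset {ρ ι : Type*} [Fintype ρ] [Fintype ι]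
    (M : Matrix ρ ι ℝ) {T : Set ι} (hT : Fintype.card ρ < T.ncard) :
    ∃ h ∈ LinearMap.ker M.mulVecLin, h ≠ 0 ∧ support h ⊆ T := by
  let extend : (T → ℝ) →ₗ[ℝ] ι → ℝ :=
    LinearMap.pi fun i => if hi : i ∈ T then LinearMap.proj ⟨i, hi⟩ else 0
  have extend_apply : ∀ c i, extend c i = if hi : i ∈ T then c ⟨i, hi⟩ else 0 := by
    intro c i
    by_cases hi : i ∈ T <;> simp [extend, hi]
  obtain ⟨c, hc, hc0⟩ := (Submodule.ne_bot_iff _).1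
    (LinearMap.ker_ne_bot_of_finrank_lt (f := M.mulVecLin ∘ₗ extend)
      (by rwa [Module.finrank_fintype_fun_eq_card, Module.finrank_fintype_fun_eq_card,
        ← Nat.card_eq_fintype_card (α := T), Nat.card_coe_set_eq]))
  refine ⟨extend c, hc, fun h0 => hc0 ?_,
    support_subset_iff'.2 fun i hi => by simp [extend_apply, hi]⟩
  ext ⟨i, hi⟩
  simpa [extend_apply, hi] using congrFun h0 i

theorem IsElementaryVec.ncard_support_le_of_mem_ker {ρ ι : Type*} [Fintype ρ] [Fintype ι]
    {M : Matrix ρ ι ℝ} {g : ι → ℝ} (hg : IsElementaryVec (LinearMap.ker M.mulVecLin) g) :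
    (support g).ncard ≤ Fintype.card ρ + 1 := by
  by_contra! hlt
  obtain ⟨i, hi⟩ := support_nonempty_iff.2 hg.2.1
  obtain ⟨h, hh, hh0, hhT⟩ := exists_ne_zero_mem_ker_support_subset M (T := support g \ {i})
    (by rw [← Set.ncard_sdiff_singleton_add_one hi] at hlt; omega)
  exact hg.2.2 h hh hh0 (hhT.trans_ssubset (Set.sdiff_singleton_ssubset.2 hi))

theorem sum_sq_le_ncard_support_mul_sq {ι : Type*} [Fintype ι] {u : ι → ℝ} {c : ℝ}
    (hu : ∀ i, |u i| ≤ c) : ∑ i, u i ^ 2 ≤ (support u).ncard * c ^ 2 := by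
  rw [Set.ncard_eq_toFinset_card', ← Finset.sum_subset (Finset.subset_univ _)
    (fun i _ hi => by simpa using hi : ∀ i ∈ Finset.univ, i ∉ (support u).toFinset → u i ^ 2 = 0)]
  refine (Finset.sum_le_card_nsmul _ _ _ fun i _ => ?_).trans_eq (nsmul_eq_mul _ _)
  exact sq_le_sq.2 ((hu i).trans (le_abs_self c))

theorem sqrt_sum_sq_le_sum_sqrt_sum_sq {ι α : Type*} [Fintype ι] [Fintype α] {x : ι → ℝ}
    {u : α → ι → ℝ} (hx : ∑ ℓ, u ℓ = x) :
    √(∑ i, x i ^ 2) ≤ ∑ ℓ, √(∑ i, u ℓ i ^ 2) := by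
  have hnorm : ∀ y : ι → ℝ, √(∑ i, y i ^ 2) = ‖WithLp.toLp 2 y‖ := by
    simp [EuclideanSpace.norm_eq]
  simp_rw [hnorm, ← hx, WithLp.toLp_sum]
  exact norm_sum_le _ _

theorem sum_abs_le_sqrt_card_mul_sqrt_sum_sq {ι : Type*} [Fintype ι] (y : ι → ℝ) :
    ∑ i, |y i| ≤ √(Fintype.card ι) * √(∑ i, y i ^ 2) := by
  rw [← Real.sqrt_mul (Nat.cast_nonneg _), Real.le_sqrt (by positivity) (by positivity)]
  simpa using sq_sum_le_card_mul_sum_sq (s := Finset.univ) (f := fun i => |y i|)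

section XA

variable {m n : ℕ} {A : Matrix (Fin m) (Fin n) ℝ} {g : Fin n ⊕ Fin m → ℝ}

theorem mem_XA_iff : g ∈ XA A ↔ A.mulVec (g ∘ Sum.inl) = g ∘ Sum.inr := by
  rw [XA, LinearMap.mem_ker, Matrix.mulVecLin_apply]
  nth_rewrite 1 [← Sum.elim_comp_inl_inr g]
  rw [Matrix.fromCols_mulVec_sumElim, Matrix.neg_mulVec, Matrix.one_mulVec, add_neg_eq_zero]

theorem exists_inr_ne_zero_of_cycleFree {z : Fin n → ℝ}
    (hcf : ¬ ∃ y : Fin n → ℝ, y ≠ 0 ∧ A.mulVec y = 0 ∧ Conforms z y)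
    (hg : IsElementaryVec (XA A) g) (hconf : Conforms (Sum.elim z (A.mulVec z)) g) :
    ∃ j, g (Sum.inr j) ≠ 0 := by
  by_contra! hv
  refine hcf ⟨g ∘ Sum.inl, fun h0 => hg.2.1 ?_, ?_, fun i hi => hconf (Sum.inl i) hi⟩
  · ext (i | j)
    exacts [congrFun h0 i, hv j]
  · rw [mem_XA_iff.1 hg.1]
    exact funext hv

variable (hg : IsElementaryVec (XA A) g) {j : Fin m} (hj : g (Sum.inr j) ≠ 0)
include hg hj

theorem abs_inl_le_kappaSub_mul (i : Fin n) :
    |g (Sum.inl i)| ≤ kappaSub (XA A) * ∑ j, |g (Sum.inr j)| := by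
  by_cases hi : g (Sum.inl i) = 0
  · simpa [hi] using mul_nonneg (kappaSub_nonneg _) (Finset.sum_nonneg fun _ _ => abs_nonneg _)
  calc |g (Sum.inl i)| ≤ kappaSub (XA A) * |g (Sum.inr j)| := abs_le_kappaSub_mul hg hj hi
    _ ≤ kappaSub (XA A) * ∑ j, |g (Sum.inr j)| :=
      mul_le_mul_of_nonneg_left (Finset.single_le_sum (f := fun j => |g (Sum.inr j)|)
        (fun _ _ => abs_nonneg _) (Finset.mem_univ j)) (kappaSub_nonneg _)

theorem ncard_support_comp_inl_le : (support (g ∘ Sum.inl)).ncard ≤ m := by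
  have hsub : insert (Sum.inr j) (Sum.inl '' support (g ∘ Sum.inl)) ⊆ support g := by
    rintro _ (rfl | ⟨i, hi, rfl⟩)
    exacts [hj, hi]
  have := Set.ncard_le_ncard hsub
  rw [Set.ncard_insert_of_notMem (by simp),
    Set.ncard_image_of_injective _ Sum.inl_injective] at this
  have := hg.ncard_support_le_of_mem_ker
  simp only [Fintype.card_fin] at this
  omega

theorem sqrt_sum_sq_inl_le :
    √(∑ i, g (Sum.inl i) ^ 2) ≤ √m * (kappaSub (XA A) * ∑ j, |g (Sum.inr j)|) := by
  have hc : 0 ≤ kappaSub (XA A) * ∑ j, |g (Sum.inr j)| :=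
    mul_nonneg (kappaSub_nonneg _) (Finset.sum_nonneg fun _ _ => abs_nonneg _)
  calc √(∑ i, g (Sum.inl i) ^ 2)
      ≤ √(m * (kappaSub (XA A) * ∑ j, |g (Sum.inr j)|) ^ 2) := by
        refine Real.sqrt_le_sqrt ((sum_sq_le_ncard_support_mul_sq (u := g ∘ Sum.inl)
          (abs_inl_le_kappaSub_mul hg hj)).trans ?_)
        gcongr
        exact_mod_cast ncard_support_comp_inl_le hg hj
    _ = √m * (kappaSub (XA A) * ∑ j, |g (Sum.inr j)|) := by
        rw [Real.sqrt_mul (Nat.cast_nonneg _), Real.sqrt_sq hc]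

end XA

/-- If `z ∈ ℝ^n` is cycle-free with respect to `A` (no nonzero
`y ∈ ker A` conforms to `z`), then `‖z‖_∞ ≤ κ(X_A)·‖Az‖₁` and
`‖z‖₂ ≤ m·κ(X_A)·‖Az‖₂`. -/
theorem cycle_free_proximity {m n : ℕ} (A : Matrix (Fin m) (Fin n) ℝ) (z : Fin n → ℝ)
    (hcf : ¬ ∃ y : Fin n → ℝ, y ≠ 0 ∧ A.mulVec y = 0 ∧ Conforms z y) :
    (⨆ i, |z i|) ≤ kappaSub (XA A) * ∑ j, |A.mulVec z j| ∧
    Real.sqrt (∑ i, (z i) ^ 2) ≤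
      m * kappaSub (XA A) * Real.sqrt (∑ j, (A.mulVec z j) ^ 2) := by
  set κ := kappaSub (XA A)
  have hκ : 0 ≤ κ := kappaSub_nonneg _
  obtain ⟨k, g, hg, hsum⟩ :=
    exists_sum_isElementaryVec_conforms (mem_XA_iff.2 rfl : Sum.elim z (A.mulVec z) ∈ XA A)
  choose j hj using fun ℓ => exists_inr_ne_zero_of_cycleFree hcf (hg ℓ).1 (hg ℓ).2
  have habs := Conforms.sum_abs_eq (fun ℓ => (hg ℓ).2) hsum
  have hz : ∑ ℓ, g ℓ ∘ Sum.inl = z := by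
    ext i
    simpa using congrFun hsum (Sum.inl i)
  have hAz : ∑ ℓ, ∑ j, |g ℓ (Sum.inr j)| = ∑ j, |A.mulVec z j| := by
    rw [Finset.sum_comm]
    exact Finset.sum_congr rfl fun j _ => habs (Sum.inr j)
  refine ⟨Real.iSup_le (fun i => ?_)
    (mul_nonneg hκ (Finset.sum_nonneg fun _ _ => abs_nonneg _)), ?_⟩
  · calc |z i| = ∑ ℓ, |g ℓ (Sum.inl i)| := (habs (Sum.inl i)).symm
      _ ≤ ∑ ℓ, κ * ∑ j, |g ℓ (Sum.inr j)| :=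
        Finset.sum_le_sum fun ℓ _ => abs_inl_le_kappaSub_mul (hg ℓ).1 (hj ℓ) i
      _ = κ * ∑ j, |A.mulVec z j| := by rw [← Finset.mul_sum, hAz]
  · calc √(∑ i, z i ^ 2) ≤ ∑ ℓ, √(∑ i, g ℓ (Sum.inl i) ^ 2) := sqrt_sum_sq_le_sum_sqrt_sum_sq hz
      _ ≤ ∑ ℓ, √m * (κ * ∑ j, |g ℓ (Sum.inr j)|) :=
        Finset.sum_le_sum fun ℓ _ => sqrt_sum_sq_inl_le (hg ℓ).1 (hj ℓ)
      _ = √m * κ * ∑ j, |A.mulVec z j| := by simp_rw [← hAz, Finset.mul_sum, mul_assoc]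
      _ ≤ √m * κ * (√m * √(∑ j, A.mulVec z j ^ 2)) := by
        refine mul_le_mul_of_nonneg_left ?_ (mul_nonneg (Real.sqrt_nonneg _) hκ)
        simpa using sum_abs_le_sqrt_card_mul_sqrt_sum_sq (A.mulVec z)
      _ = (√m * √m) * κ * √(∑ j, A.mulVec z j ^ 2) := by ring
      _ = m * κ * √(∑ j, A.mulVec z j ^ 2) := by rw [Real.mul_self_sqrt (Nat.cast_nonneg m)]
end
end

section
/- For any matrix A ∈ ℝ^{m×n}, κ(ker(A^⊤ | I_n)) = κ(X_A), i.e., the circuit imbalance measure of the kernel of the n×(m+n) matrix obtained by placing A^⊤ next to the n×n identity equals the circuit imbalance measure of X_A. -/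
/-!
After swapping the two blocks of coordinates, `ker (Aᵀ | I)` is the orthogonal complement of
`X_A`, so it suffices to show `κ(W⊥) = κ(W)`. Given an elementary vector `g` of `W` and
`i ≠ j` in its support, minimising supports among the vectors of `W⊥` that vanish on
`supp g \ {i, j}` and not at `i` yields an elementary vector `h` of `W⊥` with
`g i * h i + g j * h j = ⟪g, h⟫ = 0`, hence `|g j / g i| = |h i / h j|`. So every circuit ratio of
`W` is one of `W⊥`, and since `W⊥⊥ = W` the two sets of ratios coincide.
-/

open BigOperators Finset

noncomputable section

open Classical

variable {ι ι' : Type*}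

def circuitRatios (W : Submodule ℝ (ι → ℝ)) : Set ℝ :=
  {t : ℝ | ∃ g : ι → ℝ, IsElementaryVec W g ∧ ∃ i j : ι, g i ≠ 0 ∧ g j ≠ 0 ∧ t = |g j / g i|}

theorem kappaSub_eq (W : Submodule ℝ (ι → ℝ)) :
    kappaSub W = if W = ⊥ ∨ W = ⊤ then 1 else sSup (circuitRatios W) :=
  rfl

theorem kappaSub_congr {W : Submodule ℝ (ι → ℝ)} {W' : Submodule ℝ (ι' → ℝ)}
    (htriv : W = ⊥ ∨ W = ⊤ ↔ W' = ⊥ ∨ W' = ⊤)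
    (hratios : ¬(W = ⊥ ∨ W = ⊤) → circuitRatios W = circuitRatios W') :
    kappaSub W = kappaSub W' := by
  simp only [kappaSub_eq, ← htriv]
  split_ifs with h
  · rfl
  · rw [hratios h]

theorem IsElementaryVec.of_inf_pi_bot {V : Submodule ℝ (ι → ℝ)} {D : Set ι} {g : ι → ℝ}
    (hg : IsElementaryVec (V ⊓ Submodule.pi D fun _ => ⊥) g) : IsElementaryVec V g := by
  obtain ⟨hgV, hg0, hmin⟩ := hg
  refine ⟨Submodule.mem_inf.mp hgV |>.1, hg0, fun h hV h0 hss => hmin h ?_ h0 hss⟩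
  refine Submodule.mem_inf.mpr ⟨hV, fun k hk => ?_⟩
  by_contra hhk
  exact hss.1 hhk ((Submodule.mem_inf.mp hgV).2 k hk)

/-- A smaller-support vector of `V` vanishing at `i` could be used to cancel one more coordinate
of `h` while keeping `h i`. -/
theorem isElementaryVec_of_minimal {V : Submodule ℝ (ι → ℝ)} {h : ι → ℝ} {i : ι}
    (hV : h ∈ V) (hi : h i ≠ 0)
    (hmin : ∀ h' ∈ V, h' i ≠ 0 → ¬ Function.support h' ⊂ Function.support h) :
    IsElementaryVec V h := by
  refine ⟨hV, fun h0 => hi (by simp [h0]), fun h' hh'V h'0 hss => ?_⟩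
  by_cases h'i : h' i = 0
  · obtain ⟨k, hk⟩ := Function.ne_iff.mp h'0
    set h₂ := h - (h k / h' k) • h' with hh₂
    refine hmin h₂ (V.sub_mem hV (V.smul_mem _ hh'V)) (by simpa [hh₂, h'i] using hi) ⟨?_, ?_⟩
    · intro l hl
      by_contra hhl
      have h'l : h' l = 0 := by_contra fun hne => hhl (hss.1 hne)
      exact hl (by simp [hh₂, Function.notMem_support.mp hhl, h'l])
    · intro hsub
      exact hsub (hss.1 hk) (by simp [hh₂, div_mul_cancel₀ _ hk])
  · exact hmin h' hh'V h'i hss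

theorem exists_isElementaryVec_apply_ne_zero [Finite ι] {V : Submodule ℝ (ι → ℝ)} {i : ι}
    (hV : ∃ x ∈ V, x i ≠ 0) : ∃ g, IsElementaryVec V g ∧ g i ≠ 0 := by
  obtain ⟨_, ⟨h, ⟨hV, hi⟩, rfl⟩, hmin⟩ := wellFounded_lt.has_min
    (Function.support '' {x | x ∈ V ∧ x i ≠ 0}) (Set.Nonempty.image _ hV)
  exact ⟨h, isElementaryVec_of_minimal hV hi fun h' hV' hi' => hmin _ ⟨h', ⟨hV', hi'⟩, rfl⟩, hi⟩

theorem abs_div_eq_abs_div_of_mul_add_mul_eq_zero {a b c d : ℝ} (ha : a ≠ 0) (hd : d ≠ 0)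
    (h : a * b + c * d = 0) : |c / a| = |b / d| := by
  rw [abs_div, abs_div, div_eq_div_iff (abs_ne_zero.mpr ha) (abs_ne_zero.mpr hd), ← abs_mul,
    ← abs_mul, show c * d = -(b * a) by linarith, abs_neg]

section Orthogonal

variable [Fintype ι]

abbrev dotOrth (W : Submodule ℝ (ι → ℝ)) : Submodule ℝ (ι → ℝ) :=
  LinearMap.BilinForm.orthogonal (dotProductBilin ℝ ℝ) W

theorem mem_dotOrth {W : Submodule ℝ (ι → ℝ)} {y : ι → ℝ} :
    y ∈ dotOrth W ↔ ∀ x ∈ W, x ⬝ᵥ y = 0 :=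
  Iff.rfl

theorem dotOrth_dotOrth (W : Submodule ℝ (ι → ℝ)) : dotOrth (dotOrth W) = W :=
  LinearMap.BilinForm.orthogonal_orthogonal
    ⟨fun x hx => dotProduct_self_eq_zero.mp (hx x), fun y hy => dotProduct_self_eq_zero.mp (hy y)⟩
    (fun x y hxy => by simpa [dotProduct_comm] using hxy) W

theorem dotOrth_bot : dotOrth (⊥ : Submodule ℝ (ι → ℝ)) = ⊤ :=
  eq_top_iff.mpr fun y _ x hx => by simp [(Submodule.mem_bot ℝ).mp hx]

theorem dotOrth_eq_top_iff {W : Submodule ℝ (ι → ℝ)} : dotOrth W = ⊤ ↔ W = ⊥ := by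
  rw [← dotOrth_bot, (Function.LeftInverse.injective dotOrth_dotOrth).eq_iff]

theorem dotOrth_eq_bot_iff {W : Submodule ℝ (ι → ℝ)} : dotOrth W = ⊥ ↔ W = ⊤ := by
  rw [← dotOrth_eq_top_iff, dotOrth_dotOrth]

theorem dotOrth_sup (W W' : Submodule ℝ (ι → ℝ)) :
    dotOrth (W ⊔ W') = dotOrth W ⊓ dotOrth W' := by
  ext y
  simp only [Submodule.mem_inf, mem_dotOrth]
  refine ⟨fun h => ⟨fun x hx => h x (Submodule.mem_sup_left hx),
    fun x hx => h x (Submodule.mem_sup_right hx)⟩, ?_⟩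
  rintro ⟨h, h'⟩ _ hxx'
  obtain ⟨x, hx, x', hx', rfl⟩ := Submodule.mem_sup.mp hxx'
  rw [add_dotProduct, h x hx, h' x' hx', add_zero]

theorem dotOrth_pi_compl_bot (D : Set ι) :
    dotOrth (Submodule.pi Dᶜ fun _ => ⊥) = Submodule.pi D fun _ => ⊥ := by
  ext y
  simp only [mem_dotOrth, Submodule.mem_pi, Submodule.mem_bot]
  refine ⟨fun h k hk => ?_, fun h x hx => Finset.sum_eq_zero fun k _ => ?_⟩
  · have hsingle : Pi.single k 1 ∈ Submodule.pi Dᶜ fun _ => (⊥ : Submodule ℝ ℝ) :=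
      fun l hl => (Submodule.mem_bot ℝ).mpr (Pi.single_eq_of_ne (ne_of_mem_of_not_mem hk hl).symm _)
    simpa using h _ hsingle
  · by_cases hk : k ∈ D
    · simp [h k hk]
    · simp [hx k hk]

/-- If no vector of `W⊥` vanishing on `supp g \ {i, j}` were nonzero at `i`, then `eᵢ` would lie
in `W + ℝ^(supp g \ {i, j})`, producing a nonzero vector of `W` supported in `supp g \ {j}`. -/
theorem IsElementaryVec.exists_mem_dotOrth_inf_apply_ne_zero {W : Submodule ℝ (ι → ℝ)}
    {g : ι → ℝ} (hg : IsElementaryVec W g) {i j : ι} (hij : i ≠ j) (hi : g i ≠ 0)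
    (hj : g j ≠ 0) :
    ∃ h ∈ dotOrth W ⊓ Submodule.pi (Function.support g \ {i, j}) (fun _ => ⊥), h i ≠ 0 := by
  set D := Function.support g \ {i, j}
  by_contra! hZ
  have hsingle : Pi.single i 1 ∈ W ⊔ Submodule.pi Dᶜ (fun _ => ⊥) := by
    rw [← dotOrth_dotOrth (W ⊔ _), dotOrth_sup, dotOrth_pi_compl_bot]
    exact fun h hh => by simpa using hZ h hh
  obtain ⟨w, hw, s, hs, hws⟩ := Submodule.mem_sup.mp hsingle
  simp only [Submodule.mem_pi, Set.mem_compl_iff, Submodule.mem_bot] at hs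
  have hw_eq : w = Pi.single i 1 - s := eq_sub_of_add_eq hws
  have hsi : s i = 0 := hs i fun hiD => hiD.2 (by simp)
  have hsj : s j = 0 := hs j fun hjD => hjD.2 (by simp)
  refine hg.2.2 w hw (fun hw0 => by simpa [hw0, hsi] using congrFun hw_eq i) ⟨fun k hk => ?_, ?_⟩
  · by_cases hki : k = i
    · exact hki ▸ hi
    · by_contra hgk
      exact hk (by simp [hw_eq, hki, hs k fun hkD => hgk hkD.1])
  · exact fun hsub => hsub hj (by simp [hw_eq, hij.symm, hsj])

theorem circuitRatios_subset_dotOrth {W : Submodule ℝ (ι → ℝ)} (hW : W ≠ ⊤) :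
    circuitRatios W ⊆ circuitRatios (dotOrth W) := by
  rintro _ ⟨g, hg, i, j, hi, hj, rfl⟩
  rcases eq_or_ne i j with rfl | hij
  · obtain ⟨x, hx, hx0⟩ := Submodule.exists_mem_ne_zero_of_ne_bot (mt dotOrth_eq_bot_iff.mp hW)
    obtain ⟨k, hk⟩ := Function.ne_iff.mp hx0
    obtain ⟨h, hh, hhk⟩ := exists_isElementaryVec_apply_ne_zero ⟨x, hx, hk⟩
    exact ⟨h, hh, k, k, hhk, hhk, by rw [div_self hi, div_self hhk]⟩
  obtain ⟨h, hh, hhi⟩ := exists_isElementaryVec_apply_ne_zero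
    (hg.exists_mem_dotOrth_inf_apply_ne_zero hij hi hj)
  obtain ⟨hhW, hhD⟩ := Submodule.mem_inf.mp hh.1
  have hpair : g i * h i + g j * h j = 0 := by
    rw [← mem_dotOrth.mp hhW g hg.1, dotProduct,
      Finset.sum_eq_add_of_mem i j (mem_univ i) (mem_univ j) hij fun k _ hk => ?_]
    by_cases hgk : g k = 0
    · simp [hgk]
    · simp [(Submodule.mem_bot ℝ).mp (hhD k ⟨hgk, by simp [hk.1, hk.2]⟩)]
  have hhj : h j ≠ 0 := fun hhj => by simp [hhj, hi, hhi] at hpair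
  exact ⟨h, hh.of_inf_pi_bot, j, i, hhj, hhi,
    abs_div_eq_abs_div_of_mul_add_mul_eq_zero hi hhj hpair⟩

theorem kappaSub_dotOrth (W : Submodule ℝ (ι → ℝ)) : kappaSub (dotOrth W) = kappaSub W := by
  refine kappaSub_congr (by rw [dotOrth_eq_bot_iff, dotOrth_eq_top_iff, or_comm]) fun htriv => ?_
  have hW : W ≠ ⊤ := fun h => htriv (Or.inl (dotOrth_eq_bot_iff.mpr h))
  have hW' : dotOrth W ≠ ⊤ := fun h => htriv (Or.inr h)
  refine subset_antisymm ?_ (circuitRatios_subset_dotOrth hW)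
  simpa only [dotOrth_dotOrth] using circuitRatios_subset_dotOrth hW'

end Orthogonal

section Reindex

theorem Equiv.preimage_ssubset {α β : Type*} (σ : α ≃ β) {s t : Set β} :
    σ ⁻¹' s ⊂ σ ⁻¹' t ↔ s ⊂ t := by
  rw [Set.ssubset_def, Set.ssubset_def, σ.preimage_subset, σ.preimage_subset]

variable (σ : ι' ≃ ι)

theorem isElementaryVec_comap_funLeft {W : Submodule ℝ (ι' → ℝ)} {g : ι → ℝ} :
    IsElementaryVec (W.comap (LinearMap.funLeft ℝ ℝ σ)) g ↔ IsElementaryVec W (g ∘ σ) := by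
  have hinj := LinearMap.funLeft_injective_of_surjective ℝ ℝ σ σ.surjective
  have hne : ∀ x : ι → ℝ, x ∘ σ ≠ 0 ↔ x ≠ 0 := fun x => hinj.ne_iff' (map_zero _)
  refine and_congr Iff.rfl (and_congr (hne g).symm ?_)
  refine ((LinearMap.funLeft_surjective_of_injective ℝ ℝ σ σ.injective).forall.trans ?_).symm
  refine forall_congr' fun h => imp_congr Iff.rfl (imp_congr (hne h) (not_congr ?_))
  exact σ.preimage_ssubset (s := Function.support h) (t := Function.support g)

theorem circuitRatios_comap_funLeft (W : Submodule ℝ (ι' → ℝ)) :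
    circuitRatios (W.comap (LinearMap.funLeft ℝ ℝ σ)) = circuitRatios W := by
  ext t
  constructor
  · rintro ⟨g, hg, i, j, hi, hj, rfl⟩
    refine ⟨g ∘ σ, (isElementaryVec_comap_funLeft σ).mp hg, σ.symm i, σ.symm j, ?_⟩
    simpa using ⟨hi, hj⟩
  · rintro ⟨g, hg, i, j, hi, hj, rfl⟩
    have hg' : g = (g ∘ σ.symm) ∘ σ := by ext; simp
    rw [hg'] at hg
    refine ⟨g ∘ σ.symm, (isElementaryVec_comap_funLeft σ).mpr hg, σ i, σ j, ?_⟩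
    simpa using ⟨hi, hj⟩

theorem kappaSub_comap_funLeft (W : Submodule ℝ (ι' → ℝ)) :
    kappaSub (W.comap (LinearMap.funLeft ℝ ℝ σ)) = kappaSub W := by
  have hcomap := Submodule.comap_injective_of_surjective
    (LinearMap.funLeft_surjective_of_injective ℝ ℝ σ σ.injective)
  have hker : LinearMap.ker (LinearMap.funLeft ℝ ℝ σ) = ⊥ :=
    LinearMap.ker_eq_bot.mpr (LinearMap.funLeft_injective_of_surjective ℝ ℝ σ σ.surjective)
  refine kappaSub_congr ?_ fun _ => circuitRatios_comap_funLeft σ W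
  rw [← Submodule.comap_top (LinearMap.funLeft ℝ ℝ σ), ← hker, ← Submodule.comap_bot,
    hcomap.eq_iff, hcomap.eq_iff]

end Reindex

section DualSystem

open Matrix

theorem sumElim_mulVec_dotProduct {m n R : Type*} [Fintype m] [Fintype n] [CommSemiring R]
    (A : Matrix m n R) (u : n → R) (v : n ⊕ m → R) :
    Sum.elim u (A *ᵥ u) ⬝ᵥ v = u ⬝ᵥ (v ∘ Sum.inl + Aᵀ *ᵥ (v ∘ Sum.inr)) := by
  rw [← Sum.elim_comp_inl_inr v, sumElim_dotProduct_sumElim, dotProduct_add, mulVec_transpose,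
    dotProduct_comm (A *ᵥ u), dotProduct_mulVec, dotProduct_comm (_ ᵥ* A)]
  rfl

variable {m n : ℕ}

theorem mem_XA_iff_s7 {A : Matrix (Fin m) (Fin n) ℝ} {x : Fin n ⊕ Fin m → ℝ} :
    x ∈ XA A ↔ x ∘ Sum.inr = A *ᵥ (x ∘ Sum.inl) := by
  rw [XA, LinearMap.mem_ker, mulVecLin_apply, fromCols_mulVec, neg_mulVec, one_mulVec,
    ← sub_eq_add_neg, sub_eq_zero, eq_comm]

theorem mem_dotOrth_XA_iff {A : Matrix (Fin m) (Fin n) ℝ} {v : Fin n ⊕ Fin m → ℝ} :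
    v ∈ dotOrth (XA A) ↔ v ∘ Sum.inl + Aᵀ *ᵥ (v ∘ Sum.inr) = 0 := by
  constructor
  · refine fun hv => dotProduct_eq_zero_iff.mp fun u => ?_
    rw [dotProduct_comm, ← sumElim_mulVec_dotProduct]
    exact hv _ (mem_XA_iff_s7.mpr rfl)
  · refine fun h => mem_dotOrth.mpr fun x hx => ?_
    rw [← Sum.elim_comp_inl_inr x, mem_XA_iff_s7.mp hx, sumElim_mulVec_dotProduct, h, dotProduct_zero]

theorem ker_fromCols_transpose_one_eq_comap (A : Matrix (Fin m) (Fin n) ℝ) :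
    LinearMap.ker (fromCols Aᵀ (1 : Matrix (Fin n) (Fin n) ℝ)).mulVecLin =
      (dotOrth (XA A)).comap (LinearMap.funLeft ℝ ℝ (Equiv.sumComm (Fin n) (Fin m))) := by
  ext z
  rw [LinearMap.mem_ker, Submodule.mem_comap, mem_dotOrth_XA_iff, mulVecLin_apply,
    fromCols_mulVec, one_mulVec, add_comm]
  rfl

end DualSystem

/-- For any matrix `A ∈ ℝ^{m×n}`, the circuit imbalance measure of
`ker(A^⊤ | I_n)` equals that of `X_A = ker(A | −I_m)`. -/
theorem kappa_dual_system {m n : ℕ} (A : Matrix (Fin m) (Fin n) ℝ) :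
    kappaSub (LinearMap.ker
        (Matrix.fromCols A.transpose (1 : Matrix (Fin n) (Fin n) ℝ)).mulVecLin) =
      kappaSub (XA A) := by
  rw [ker_fromCols_transpose_one_eq_comap, kappaSub_comap_funLeft, kappaSub_dotOrth]
end
end

section
/- Let A ∈ ℝ^{m×n} with ‖A‖₁ > 0, b ∈ ℝ^m, u ∈ ℝ^n with u ≥ 0, ĉ ∈ ℝ^n, ζ > 0, and let C̄ ≥ 3 be a constant. If F*_τ ≤ C̄²·ζ for some τ ∈ ℝ, then F*_{τ − C̄√ζ/2} ≤ (2C̄² − 1)·ζ. -/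
open BigOperators Finset

noncomputable section

open Classical

/-- The potential function
`F_τ(x) = ½(max{0, ⟨ĉ,x⟩ − τ})² + (1/(2‖A‖₁²))‖Ax − b‖₂²`. -/
noncomputable def Ftau {m n : ℕ} (A : Matrix (Fin m) (Fin n) ℝ) (b : Fin m → ℝ)
    (chat : Fin n → ℝ) (τ : ℝ) (x : Fin n → ℝ) : ℝ :=
  (1 / 2) * (max 0 ((∑ i, chat i * x i) - τ)) ^ 2 +
    (1 / (2 * (⨆ j, ∑ i, |A i j|) ^ 2)) * ∑ j, (A.mulVec x j - b j) ^ 2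

/-- `F*_τ = min{F_τ(x) : 0 ≤ x ≤ u}`. -/
noncomputable def Fstar {m n : ℕ} (A : Matrix (Fin m) (Fin n) ℝ) (b : Fin m → ℝ)
    (u chat : Fin n → ℝ) (τ : ℝ) : ℝ :=
  sInf {v : ℝ | ∃ x : Fin n → ℝ, 0 ≤ x ∧ x ≤ u ∧ v = Ftau A b chat τ x}

/-- `α(x) = max{0, ⟨ĉ,x⟩ − τ}`. -/
noncomputable def alphaF {n : ℕ} (chat : Fin n → ℝ) (τ : ℝ) (x : Fin n → ℝ) : ℝ :=
  max 0 ((∑ i, chat i * x i) - τ)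

/-- `β(x) = ‖Ax − b‖₂ / ‖A‖₁`. -/
noncomputable def betaF {m n : ℕ} (A : Matrix (Fin m) (Fin n) ℝ) (b : Fin m → ℝ)
    (x : Fin n → ℝ) : ℝ :=
  Real.sqrt (∑ j, (A.mulVec x j - b j) ^ 2) / (⨆ j, ∑ i, |A i j|)

/-!
Take a minimiser `x` of `F_τ` over the box. Lowering `τ` by `δ ≥ 0` raises `α(x)` by at most `δ`,
so `F_{τ-δ}(x) ≤ F_τ(x) + δ α(x) + δ²/2`, and `α(x)² ≤ 2 F_τ(x) ≤ 2 C̄² ζ`. For `δ = C̄√ζ/2`,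
AM-GM gives `δ α(x) ≤ 3δ²/2 + α(x)²/6 ≤ (17/24) C̄² ζ`, so `F*_{τ-δ} ≤ (11/6) C̄² ζ`,
which is at most `(2C̄² − 1) ζ` as soon as `C̄² ≥ 6`.
-/

section Potential

variable {m n : ℕ} (A : Matrix (Fin m) (Fin n) ℝ) (b : Fin m → ℝ) (chat : Fin n → ℝ)

lemma Ftau_eq_alphaF (τ : ℝ) (x : Fin n → ℝ) :
    Ftau A b chat τ x = alphaF chat τ x ^ 2 / 2 +
      (1 / (2 * (⨆ j, ∑ i, |A i j|) ^ 2)) * ∑ j, (A.mulVec x j - b j) ^ 2 := by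
  rw [Ftau, alphaF]
  ring

lemma alphaF_nonneg (τ : ℝ) (x : Fin n → ℝ) : 0 ≤ alphaF chat τ x :=
  le_max_left _ _

lemma sq_alphaF_le_two_mul_Ftau (τ : ℝ) (x : Fin n → ℝ) :
    alphaF chat τ x ^ 2 ≤ 2 * Ftau A b chat τ x := by
  have : 0 ≤ (1 / (2 * (⨆ j, ∑ i, |A i j|) ^ 2)) * ∑ j, (A.mulVec x j - b j) ^ 2 := by
    positivity
  rw [Ftau_eq_alphaF]
  linarith

lemma Ftau_nonneg (τ : ℝ) (x : Fin n → ℝ) : 0 ≤ Ftau A b chat τ x := by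
  unfold Ftau
  positivity

lemma continuous_Ftau (τ : ℝ) : Continuous (Ftau A b chat τ) := by
  unfold Ftau
  fun_prop

lemma Ftau_sub_le (τ : ℝ) {δ : ℝ} (hδ : 0 ≤ δ) (x : Fin n → ℝ) :
    Ftau A b chat (τ - δ) x ≤ Ftau A b chat τ x + δ * alphaF chat τ x + δ ^ 2 / 2 := by
  have hα : alphaF chat (τ - δ) x ≤ alphaF chat τ x + δ := by
    unfold alphaF
    apply max_le <;> linarith [le_max_left 0 ((∑ i, chat i * x i) - τ),
      le_max_right 0 ((∑ i, chat i * x i) - τ)]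
  have hsq : alphaF chat (τ - δ) x ^ 2 ≤ (alphaF chat τ x + δ) ^ 2 :=
    pow_le_pow_left₀ (alphaF_nonneg chat _ x) hα 2
  rw [Ftau_eq_alphaF, Ftau_eq_alphaF]
  nlinarith

variable (u : Fin n → ℝ)

lemma Fstar_le_Ftau (τ : ℝ) {x : Fin n → ℝ} (hx0 : 0 ≤ x) (hxu : x ≤ u) :
    Fstar A b u chat τ ≤ Ftau A b chat τ x :=
  csInf_le ⟨0, by rintro v ⟨y, -, -, rfl⟩; exact Ftau_nonneg A b chat τ y⟩ ⟨x, hx0, hxu, rfl⟩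

lemma exists_Ftau_eq_Fstar (hu : 0 ≤ u) (τ : ℝ) :
    ∃ x, 0 ≤ x ∧ x ≤ u ∧ Ftau A b chat τ x = Fstar A b u chat τ := by
  obtain ⟨x, ⟨hx0, hxu⟩, hmin⟩ := isCompact_Icc.exists_isMinOn (Set.nonempty_Icc.2 hu)
    (continuous_Ftau A b chat τ).continuousOn
  refine ⟨x, hx0, hxu, le_antisymm ?_ (Fstar_le_Ftau A b chat u τ hx0 hxu)⟩
  refine le_csInf ⟨_, x, hx0, hxu, rfl⟩ ?_
  rintro v ⟨y, hy0, hyu, rfl⟩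
  exact isMinOn_iff.1 hmin y ⟨hy0, hyu⟩

end Potential

lemma shift_bound_of_sq_le {C ζ F α : ℝ} (hC : 3 ≤ C) (hζ : 0 ≤ ζ) (hF : F ≤ C ^ 2 * ζ)
    (hα : α ^ 2 ≤ 2 * F) :
    F + C * Real.sqrt ζ / 2 * α + (C * Real.sqrt ζ / 2) ^ 2 / 2 ≤ (2 * C ^ 2 - 1) * ζ := by
  set δ := C * Real.sqrt ζ / 2
  have hδ : δ ^ 2 = C ^ 2 * ζ / 4 := by
    rw [div_pow, mul_pow, Real.sq_sqrt hζ]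
    ring
  have amgm : δ * α ≤ 3 * δ ^ 2 / 2 + α ^ 2 / 6 := by nlinarith [sq_nonneg (3 * δ - α)]
  have hC2 : 9 * ζ ≤ C ^ 2 * ζ := mul_le_mul_of_nonneg_right (by nlinarith) hζ
  nlinarith

theorem Fstar_lipschitz_shift_general {m n : ℕ} (A : Matrix (Fin m) (Fin n) ℝ)
    (b : Fin m → ℝ) (u : Fin n → ℝ) (hu : 0 ≤ u)
    (chat : Fin n → ℝ)
    (ζ : ℝ) (hζ : 0 < ζ) (Cbar : ℝ) (hCbar : 3 ≤ Cbar) (τ : ℝ)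
    (hFτ : Fstar A b u chat τ ≤ Cbar ^ 2 * ζ) :
    Fstar A b u chat (τ - Cbar * Real.sqrt ζ / 2) ≤ (2 * Cbar ^ 2 - 1) * ζ := by
  obtain ⟨x, hx0, hxu, hx⟩ := exists_Ftau_eq_Fstar A b chat u hu τ
  have hδ : 0 ≤ Cbar * Real.sqrt ζ / 2 := by positivity
  calc Fstar A b u chat (τ - Cbar * Real.sqrt ζ / 2)
      ≤ Ftau A b chat (τ - Cbar * Real.sqrt ζ / 2) x := Fstar_le_Ftau A b chat u _ hx0 hxu
    _ ≤ Ftau A b chat τ x + Cbar * Real.sqrt ζ / 2 * alphaF chat τ x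
          + (Cbar * Real.sqrt ζ / 2) ^ 2 / 2 := Ftau_sub_le A b chat τ hδ x
    _ ≤ (2 * Cbar ^ 2 - 1) * ζ :=
      shift_bound_of_sq_le hCbar hζ.le (hx ▸ hFτ) (sq_alphaF_le_two_mul_Ftau A b chat τ x)

/-- For `ζ > 0` and a constant `C̄ ≥ 3`, if `F*_τ ≤ C̄²ζ`, then
`F*_{τ − C̄√ζ/2} ≤ (2C̄² − 1)ζ`. -/
theorem Fstar_lipschitz_shift {m n : ℕ} (A : Matrix (Fin m) (Fin n) ℝ)
    (b : Fin m → ℝ) (u : Fin n → ℝ) (hu : 0 ≤ u)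
    (hA : 0 < ⨆ j, ∑ i, |A i j|) (chat : Fin n → ℝ)
    (ζ : ℝ) (hζ : 0 < ζ) (Cbar : ℝ) (hCbar : 3 ≤ Cbar) (τ : ℝ)
    (hFτ : Fstar A b u chat τ ≤ Cbar ^ 2 * ζ) :
    Fstar A b u chat (τ - Cbar * Real.sqrt ζ / 2) ≤ (2 * Cbar ^ 2 - 1) * ζ :=
  Fstar_lipschitz_shift_general A b u hu chat ζ hζ Cbar hCbar τ hFτ
end
end
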